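/- Let μ be a real number. Then for all x ∈ (0,∞), the operator A³ applied to the function x ↦ x^μ satisfies (A³ (·^μ))(x) = d³⁺⁺(μ) x^{μ+2} + d³⁺(μ) x^{μ+1} + d³⁰(μ) x^{μ} + d³⁻(μ) x^{μ−1}. -/

import Mathlib

/-!
The power function `x ^ μ` is an eigenfunction of both `q`-dilations: `(x / q) ^ μ = q ^ (-μ) x ^ μ`
and `(q x) ^ μ = q ^ μ x ^ μ`. Hence `A³ (· ^ μ) x` is `x ^ μ` times a Laurent polynomial in `x`.
Expanding `x⁻¹ ∏ₙ (x - aₙ tₙ)` by Vieta's formulas and merging `q ^ (∓μ)` into the exponents of the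
elementary symmetric functions of the `q ^ (hₙ + 1/2) tₙ` (resp. `q ^ (lₙ - 1/2) tₙ`) produces the
coefficients `d³⁺⁺`, `d³⁺`, `d³⁰`, `d³⁻`.
-/

noncomputable def qp (q r : ℝ) : ℂ := ((q ^ r : ℝ) : ℂ)

noncomputable def A3 (q h1 h2 h3 l1 l2 l3 b : ℝ) (t1 t2 t3 : ℂ) (g : ℝ → ℂ) (x : ℝ) : ℂ :=
  (x : ℂ)⁻¹ * ((x : ℂ) - qp q (h1 + 1/2) * t1) * ((x : ℂ) - qp q (h2 + 1/2) * t2)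
      * ((x : ℂ) - qp q (h3 + 1/2) * t3) * g (x / q)
    + (x : ℂ)⁻¹ * ((x : ℂ) - qp q (l1 - 1/2) * t1) * ((x : ℂ) - qp q (l2 - 1/2) * t2)
      * ((x : ℂ) - qp q (l3 - 1/2) * t3) * g (q * x)
    + (-(qp q (1/2) + qp q (-(1/2))) * (x : ℂ) ^ 2
        + ((qp q h1 + qp q l1) * t1 + (qp q h2 + qp q l2) * t2 + (qp q h3 + qp q l3) * t3) * (x : ℂ)
        + qp q ((h1 + h2 + h3 + l1 + l2 + l3) / 2) * (qp q (b / 2) + qp q (-b / 2))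
          * t1 * t2 * t3 * (x : ℂ)⁻¹) * g x

noncomputable def d3pp (q μ : ℝ) : ℂ :=
  qp q (-μ) + qp q μ - qp q (1/2) - qp q (-(1/2))

noncomputable def d3p (q h1 h2 h3 l1 l2 l3 : ℝ) (t1 t2 t3 : ℂ) (μ : ℝ) : ℂ :=
  (qp q h1 + qp q l1 - qp q (h1 + 1/2 - μ) - qp q (l1 - 1/2 + μ)) * t1
    + (qp q h2 + qp q l2 - qp q (h2 + 1/2 - μ) - qp q (l2 - 1/2 + μ)) * t2
    + (qp q h3 + qp q l3 - qp q (h3 + 1/2 - μ) - qp q (l3 - 1/2 + μ)) * t3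

noncomputable def d3z (q h1 h2 h3 l1 l2 l3 : ℝ) (t1 t2 t3 : ℂ) (μ : ℝ) : ℂ :=
  (qp q (h1 + h2 + 1 - μ) + qp q (l1 + l2 - 1 + μ)) * t1 * t2
    + (qp q (h1 + h3 + 1 - μ) + qp q (l1 + l3 - 1 + μ)) * t1 * t3
    + (qp q (h2 + h3 + 1 - μ) + qp q (l2 + l3 - 1 + μ)) * t2 * t3

noncomputable def d3m (q h1 h2 h3 l1 l2 l3 b : ℝ) (t1 t2 t3 : ℂ) (μ : ℝ) : ℂ :=
  (-qp q (h1 + h2 + h3 + 3/2 - μ) - qp q (l1 + l2 + l3 - 3/2 + μ)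
      + qp q ((h1 + h2 + h3 + l1 + l2 + l3) / 2) * (qp q (b / 2) + qp q (-b / 2))) * t1 * t2 * t3

lemma inv_mul_sub_mul_sub_mul_sub {K : Type*} [Field K] {x : K} (hx : x ≠ 0) (u v w : K) :
    x⁻¹ * (x - u) * (x - v) * (x - w)
      = x ^ 2 - (u + v + w) * x + (u * v + u * w + v * w) - u * v * w * x⁻¹ := by
  field_simp
  ring

section qp

variable {q : ℝ} (hq : 0 < q)
include hq

lemma qp_add (a b : ℝ) : qp q (a + b) = qp q a * qp q b := by
  simp [qp, Real.rpow_add hq]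

lemma ofReal_div_rpow_eq_qp_mul {x : ℝ} (hx : 0 ≤ x) (μ : ℝ) :
    (((x / q) ^ μ : ℝ) : ℂ) = qp q (-μ) * ((x ^ μ : ℝ) : ℂ) := by
  rw [Real.div_rpow hx hq.le, qp, Real.rpow_neg hq.le]
  push_cast
  ring

lemma ofReal_mul_rpow_eq_qp_mul {x : ℝ} (hx : 0 ≤ x) (μ : ℝ) :
    (((q * x) ^ μ : ℝ) : ℂ) = qp q μ * ((x ^ μ : ℝ) : ℂ) := by
  rw [Real.mul_rpow hq.le hx, qp]
  push_cast
  ring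

variable (h1 h2 h3 l1 l2 l3 : ℝ) (t1 t2 t3 : ℂ) (μ : ℝ)

lemma d3p_eq : d3p q h1 h2 h3 l1 l2 l3 t1 t2 t3 μ
    = ((qp q h1 + qp q l1) * t1 + (qp q h2 + qp q l2) * t2 + (qp q h3 + qp q l3) * t3)
      - qp q (-μ) * (qp q (h1 + 1/2) * t1 + qp q (h2 + 1/2) * t2 + qp q (h3 + 1/2) * t3)
      - qp q μ * (qp q (l1 - 1/2) * t1 + qp q (l2 - 1/2) * t2 + qp q (l3 - 1/2) * t3) := by
  have hh (a : ℝ) : qp q (a + 1/2 - μ) = qp q (a + 1/2) * qp q (-μ) := by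
    rw [← qp_add hq]; ring_nf
  have hl (a : ℝ) : qp q (a - 1/2 + μ) = qp q (a - 1/2) * qp q μ := qp_add hq _ _
  simp only [d3p, hh, hl]
  ring

lemma d3z_eq : d3z q h1 h2 h3 l1 l2 l3 t1 t2 t3 μ
    = qp q (-μ) * (qp q (h1 + 1/2) * t1 * (qp q (h2 + 1/2) * t2)
        + qp q (h1 + 1/2) * t1 * (qp q (h3 + 1/2) * t3)
        + qp q (h2 + 1/2) * t2 * (qp q (h3 + 1/2) * t3))
      + qp q μ * (qp q (l1 - 1/2) * t1 * (qp q (l2 - 1/2) * t2)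
        + qp q (l1 - 1/2) * t1 * (qp q (l3 - 1/2) * t3)
        + qp q (l2 - 1/2) * t2 * (qp q (l3 - 1/2) * t3)) := by
  have hh (a b : ℝ) :
      qp q (a + b + 1 - μ) = qp q (a + 1/2) * qp q (b + 1/2) * qp q (-μ) := by
    rw [← qp_add hq, ← qp_add hq]; ring_nf
  have hl (a b : ℝ) :
      qp q (a + b - 1 + μ) = qp q (a - 1/2) * qp q (b - 1/2) * qp q μ := by
    rw [← qp_add hq, ← qp_add hq]; ring_nf
  simp only [d3z, hh, hl]
  ring

lemma d3m_eq (b : ℝ) : d3m q h1 h2 h3 l1 l2 l3 b t1 t2 t3 μ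
    = qp q ((h1 + h2 + h3 + l1 + l2 + l3) / 2) * (qp q (b / 2) + qp q (-b / 2)) * t1 * t2 * t3
      - qp q (-μ) * (qp q (h1 + 1/2) * t1 * (qp q (h2 + 1/2) * t2) * (qp q (h3 + 1/2) * t3))
      - qp q μ * (qp q (l1 - 1/2) * t1 * (qp q (l2 - 1/2) * t2) * (qp q (l3 - 1/2) * t3)) := by
  have hh : qp q (h1 + h2 + h3 + 3/2 - μ)
      = qp q (h1 + 1/2) * qp q (h2 + 1/2) * qp q (h3 + 1/2) * qp q (-μ) := by
    rw [← qp_add hq, ← qp_add hq, ← qp_add hq]; ring_nf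
  have hl : qp q (l1 + l2 + l3 - 3/2 + μ)
      = qp q (l1 - 1/2) * qp q (l2 - 1/2) * qp q (l3 - 1/2) * qp q μ := by
    rw [← qp_add hq, ← qp_add hq, ← qp_add hq]; ring_nf
  rw [d3m, hh, hl]
  ring

end qp

theorem stmt3_general (q h1 h2 h3 l1 l2 l3 b : ℝ) (hq : 0 < q)
    (t1 t2 t3 : ℂ) (μ : ℝ) :
    ∀ x : ℝ, 0 < x →
      A3 q h1 h2 h3 l1 l2 l3 b t1 t2 t3 (fun y : ℝ => ((y ^ μ : ℝ) : ℂ)) x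
        = d3pp q μ * ((x ^ (μ + 2) : ℝ) : ℂ)
          + d3p q h1 h2 h3 l1 l2 l3 t1 t2 t3 μ * ((x ^ (μ + 1) : ℝ) : ℂ)
          + d3z q h1 h2 h3 l1 l2 l3 t1 t2 t3 μ * ((x ^ μ : ℝ) : ℂ)
          + d3m q h1 h2 h3 l1 l2 l3 b t1 t2 t3 μ * ((x ^ (μ - 1) : ℝ) : ℂ) := by
  intro x hx
  have hx0 : (x : ℂ) ≠ 0 := Complex.ofReal_ne_zero.mpr hx.ne'
  have hpow2 : x ^ (μ + 2) = x ^ μ * x ^ 2 := by rw [Real.rpow_add hx, Real.rpow_two]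
  rw [A3, ofReal_div_rpow_eq_qp_mul hq hx.le, ofReal_mul_rpow_eq_qp_mul hq hx.le,
    inv_mul_sub_mul_sub_mul_sub hx0, inv_mul_sub_mul_sub_mul_sub hx0,
    d3p_eq hq, d3z_eq hq, d3m_eq hq, d3pp, hpow2, Real.rpow_add_one hx.ne',
    Real.rpow_sub_one hx.ne']
  push_cast
  ring

theorem stmt3 (q h1 h2 h3 l1 l2 l3 b : ℝ) (hq : 0 < q) (hq1 : q ≠ 1)
    (t1 t2 t3 : ℂ) (ht1 : t1 ≠ 0) (ht2 : t2 ≠ 0) (ht3 : t3 ≠ 0) (μ : ℝ) :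
    ∀ x : ℝ, 0 < x →
      A3 q h1 h2 h3 l1 l2 l3 b t1 t2 t3 (fun y : ℝ => ((y ^ μ : ℝ) : ℂ)) x
        = d3pp q μ * ((x ^ (μ + 2) : ℝ) : ℂ)
          + d3p q h1 h2 h3 l1 l2 l3 t1 t2 t3 μ * ((x ^ (μ + 1) : ℝ) : ℂ)
          + d3z q h1 h2 h3 l1 l2 l3 t1 t2 t3 μ * ((x ^ μ : ℝ) : ℂ)
          + d3m q h1 h2 h3 l1 l2 l3 b t1 t2 t3 μ * ((x ^ (μ - 1) : ℝ) : ℂ) :=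
  stmt3_general q h1 h2 h3 l1 l2 l3 b hq t1 t2 t3 μ
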